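/- The group Aut⁺(H) of center-fixing automorphisms of the Heisenberg group H = Zν × Λ is isomorphic to the semidirect product Sp(Λ) ⋉ Hom(Λ, Zν). -/

import Mathlib

/-- A `A`-valued antisymmetric (alternating) bilinear form on an abelian group `Λ`. -/
structure AntisymmForm (A : Type*) (Λ : Type*) [AddCommGroup A] [AddCommGroup Λ] where
  B : Λ → Λ → A
  add_left : ∀ x y z : Λ, B (x + y) z = B x z + B y z
  add_right : ∀ x y z : Λ, B x (y + z) = B x y + B x z
  antisymm : ∀ x y : Λ, B x y = - B y x
  alternating : ∀ x : Λ, B x x = 0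

namespace AntisymmForm

variable {A Λ : Type*} [AddCommGroup A] [AddCommGroup Λ] (ω : AntisymmForm A Λ)

lemma zero_left (y : Λ) : ω.B 0 y = 0 := by
  have h := ω.add_left 0 0 y
  rw [add_zero] at h
  exact (left_eq_add.mp h)

lemma zero_right (x : Λ) : ω.B x 0 = 0 := by
  have h := ω.add_right x 0 0
  rw [add_zero] at h
  exact (left_eq_add.mp h)

lemma neg_left (x y : Λ) : ω.B (-x) y = - ω.B x y := by
  have h := ω.add_left x (-x) y
  rw [add_neg_cancel, ω.zero_left] at h
  exact eq_neg_of_add_eq_zero_right h.symm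

lemma neg_right (x y : Λ) : ω.B x (-y) = - ω.B x y := by
  have h := ω.add_right x y (-y)
  rw [add_neg_cancel, ω.zero_right] at h
  exact eq_neg_of_add_eq_zero_right h.symm

end AntisymmForm

/-- The Heisenberg-type group `A × Λ` with product `(k,x)(l,y) = (k+l+x.y, x+y)`. -/
@[ext]
structure Heis {A Λ : Type*} [AddCommGroup A] [AddCommGroup Λ] (ω : AntisymmForm A Λ) where
  k : A
  x : Λ

namespace Heis

variable {A Λ : Type*} [AddCommGroup A] [AddCommGroup Λ] {ω : AntisymmForm A Λ}

instance : Group (Heis ω) where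
  mul a b := ⟨a.k + b.k + ω.B a.x b.x, a.x + b.x⟩
  one := ⟨0, 0⟩
  inv a := ⟨-a.k, -a.x⟩
  mul_assoc a b c := by
    refine Heis.ext ?_ ?_
    · show a.k + b.k + ω.B a.x b.x + c.k + ω.B (a.x + b.x) c.x
        = a.k + (b.k + c.k + ω.B b.x c.x) + ω.B a.x (b.x + c.x)
      rw [ω.add_left, ω.add_right]; abel
    · show a.x + b.x + c.x = a.x + (b.x + c.x)
      abel
  one_mul a := by
    refine Heis.ext ?_ ?_
    · show 0 + a.k + ω.B 0 a.x = a.k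
      rw [ω.zero_left]; abel
    · show 0 + a.x = a.x
      abel
  mul_one a := by
    refine Heis.ext ?_ ?_
    · show a.k + 0 + ω.B a.x 0 = a.k
      rw [ω.zero_right]; abel
    · show a.x + 0 = a.x
      abel
  inv_mul_cancel a := by
    refine Heis.ext ?_ ?_
    · show -a.k + a.k + ω.B (-a.x) a.x = 0
      rw [ω.neg_left, ω.alternating]; abel
    · show -a.x + a.x = 0
      abel

@[simp] lemma mul_k (a b : Heis ω) : (a * b).k = a.k + b.k + ω.B a.x b.x := rfl
@[simp] lemma mul_x (a b : Heis ω) : (a * b).x = a.x + b.x := rfl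
@[simp] lemma one_k : (1 : Heis ω).k = 0 := rfl
@[simp] lemma one_x : (1 : Heis ω).x = 0 := rfl
@[simp] lemma inv_k (a : Heis ω) : a⁻¹.k = -a.k := rfl
@[simp] lemma inv_x (a : Heis ω) : a⁻¹.x = -a.x := rfl

end Heis

/-- The multiplicative group structure on `AddAut` (composition), as in the older Mathlib. -/
instance AddAut.mulGroupOfComp (M : Type*) [Add M] : Group (AddAut M) where
  mul g h := AddEquiv.trans h g
  one := AddEquiv.refl _
  inv := AddEquiv.symm
  mul_assoc _ _ _ := rfl
  one_mul _ := rfl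
  mul_one _ := rfl
  inv_mul_cancel := AddEquiv.self_trans_symm

/-- The symplectic group of an antisymmetric form, as a subgroup of `AddAut Λ`. -/
def Sp {A Λ : Type*} [AddCommGroup A] [AddCommGroup Λ] (ω : AntisymmForm A Λ) :
    Subgroup (AddAut Λ) where
  carrier := {S | ∀ x y : Λ, ω.B (S x) (S y) = ω.B x y}
  one_mem' := fun _ _ => rfl
  mul_mem' := by
    intro S T hS hT x y
    exact (hS (T x) (T y)).trans (hT x y)
  inv_mem' := by
    intro S hS x y
    have h := hS (S⁻¹ x) (S⁻¹ y)
    have e : ∀ z : Λ, S (S⁻¹ z) = z := fun z => S.apply_symm_apply z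
    simpa [e] using h.symm

/-- The group of automorphisms of the Heisenberg group which are the identity on
the center, as a subgroup of `MulAut (Heis ω)`. -/
def AutPlus {A Λ : Type*} [AddCommGroup A] [AddCommGroup Λ] (ω : AntisymmForm A Λ) :
    Subgroup (MulAut (Heis ω)) where
  carrier := {τ | ∀ c : A, τ ⟨c, 0⟩ = ⟨c, 0⟩}
  one_mem' := fun _ => rfl
  mul_mem' := by
    intro τ σ hτ hσ c
    show τ (σ ⟨c, 0⟩) = ⟨c, 0⟩
    rw [hσ c, hτ c]
  inv_mem' := by
    intro τ hτ c
    show τ.symm ⟨c, 0⟩ = ⟨c, 0⟩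
    exact τ.symm_apply_eq.mpr (hτ c).symm

@[simp] lemma addAutC_inv_apply {M : Type*} [Add M] (g : AddAut M) (x : M) :
    g⁻¹ x = g.symm x := rfl
@[simp] lemma addAutC_mul_apply {M : Type*} [Add M] (g h : AddAut M) (x : M) :
    (g * h) x = g (h x) := rfl
@[simp] lemma addAutC_one_apply {M : Type*} [Add M] (x : M) :
    (1 : AddAut M) x = x := rfl

section Aux

variable {A Λ : Type*} [AddCommGroup A] [AddCommGroup Λ] {ω : AntisymmForm A Λ}

/-- The action of `Sp ω` on `Λ →+ A` by precomposition with the inverse, as an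
additive automorphism. -/
def spAct (ω : AntisymmForm A Λ) (S : Sp ω) : (Λ →+ A) ≃+ (Λ →+ A) where
  toFun δ := δ.comp ((S⁻¹ : Sp ω) : AddAut Λ).toAddMonoidHom
  invFun δ := δ.comp ((S : AddAut Λ)).toAddMonoidHom
  left_inv δ := by
    ext x
    simp [AddAut.inv_def]
  right_inv δ := by
    ext x
    simp [AddAut.inv_def]
  map_add' δ₁ δ₂ := by ext x; simp

@[simp] lemma spAct_apply (S : Sp ω) (δ : Λ →+ A) (x : Λ) :
    spAct ω S δ x = δ (((S⁻¹ : Sp ω) : AddAut Λ) x) := rfl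

/-- The action as a homomorphism `Sp ω →* MulAut (Multiplicative (Λ →+ A))`. -/
def spPhi (ω : AntisymmForm A Λ) : Sp ω →* MulAut (Multiplicative (Λ →+ A)) where
  toFun S := AddEquiv.toMultiplicative (spAct ω S)
  map_one' := by
    refine MulEquiv.ext fun δ => ?_
    show Multiplicative.ofAdd ((spAct ω 1) (Multiplicative.toAdd δ)) = δ
    refine (AddMonoidHom.ext fun x => ?_ : spAct ω 1 (Multiplicative.toAdd δ) = Multiplicative.toAdd δ) ▸ rfl
    simp [AddAut.inv_def]
  map_mul' S T := by
    refine MulEquiv.ext fun δ => ?_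
    show Multiplicative.ofAdd ((spAct ω (S * T)) _) = Multiplicative.ofAdd ((spAct ω S) ((spAct ω T) _))
    refine congrArg Multiplicative.ofAdd (AddMonoidHom.ext fun x => ?_)
    show Multiplicative.toAdd δ _ = Multiplicative.toAdd δ _
    refine congrArg _ ?_
    simp [AddAut.inv_def]

@[simp] lemma spPhi_apply (S : Sp ω) (δ : Λ →+ A) (x : Λ) :
    Multiplicative.toAdd (spPhi ω S (Multiplicative.ofAdd δ)) x
      = δ (((S⁻¹ : Sp ω) : AddAut Λ) x) := rfl

end Aux

section Main

variable {A Λ : Type*} [AddCommGroup A] [AddCommGroup Λ] {ω : AntisymmForm A Λ}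

/-- The automorphism of `Heis ω` given by `(k, x) ↦ (k + δ x, S x)`. -/
def heisAut (δ : Λ →+ A) (S : Sp ω) : MulAut (Heis ω) where
  toFun a := ⟨a.k + δ a.x, (S : AddAut Λ) a.x⟩
  invFun a := ⟨a.k - δ ((S : AddAut Λ).symm a.x), (S : AddAut Λ).symm a.x⟩
  left_inv a := by
    refine Heis.ext ?_ ?_ <;> simp
  right_inv a := by
    refine Heis.ext ?_ ?_ <;> simp
  map_mul' a b := by
    refine Heis.ext ?_ ?_
    · show a.k + b.k + ω.B a.x b.x + δ (a.x + b.x)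
        = (a.k + δ a.x) + (b.k + δ b.x) + ω.B ((S : AddAut Λ) a.x) ((S : AddAut Λ) b.x)
      rw [S.2 a.x b.x, map_add]
      abel
    · show (S : AddAut Λ) (a.x + b.x) = (S : AddAut Λ) a.x + (S : AddAut Λ) b.x
      exact map_add _ _ _

@[simp] lemma heisAut_apply (δ : Λ →+ A) (S : Sp ω) (a : Heis ω) :
    heisAut δ S a = ⟨a.k + δ a.x, (S : AddAut Λ) a.x⟩ := rfl

lemma heisAut_mem (δ : Λ →+ A) (S : Sp ω) : heisAut δ S ∈ AutPlus ω := by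
  intro c
  refine Heis.ext ?_ ?_ <;> simp

/-- The isomorphism from the semidirect product onto `AutPlus ω`. -/
def heisPsi (ω : AntisymmForm A Λ) :
    (Multiplicative (Λ →+ A)) ⋊[spPhi ω] (Sp ω) →* AutPlus ω where
  toFun p := ⟨heisAut ((Multiplicative.toAdd p.left).comp
      ((p.right : AddAut Λ)).toAddMonoidHom) p.right,
    heisAut_mem _ _⟩
  map_one' := by
    refine Subtype.ext (MulEquiv.ext fun a => ?_)
    refine Heis.ext ?_ ?_ <;> simp
  map_mul' p q := by
    refine Subtype.ext (MulEquiv.ext fun a => ?_)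
    refine Heis.ext ?_ ?_
    · have h : Multiplicative.toAdd ((spPhi ω p.right) q.left)
            ((p.right : AddAut Λ) ((q.right : AddAut Λ) a.x))
          = Multiplicative.toAdd q.left
            ((p.right : AddAut Λ).symm ((p.right : AddAut Λ) ((q.right : AddAut Λ) a.x))) := rfl
      simp only [heisAut_apply, SemidirectProduct.mul_left, SemidirectProduct.mul_right,
        toAdd_mul, AddMonoidHom.add_apply, AddMonoidHom.comp_apply,
        AddEquiv.toAddMonoidHom_eq_coe, AddMonoidHom.coe_coe, Subgroup.coe_mul,
        AddAut.mul_apply, addAutC_mul_apply, MulAut.mul_apply, MulEquiv.toEquiv_eq_coe, Equiv.toFun_as_coe, MulEquiv.coe_toEquiv, h,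
        AddEquiv.symm_apply_apply]
      abel
    · show ((p.right * q.right : Sp ω) : AddAut Λ) a.x
        = ((p.right : AddAut Λ)) (((q.right : AddAut Λ)) a.x)
      simp

end Main

section Bij

variable {A Λ : Type*} [AddCommGroup A] [AddCommGroup Λ] {ω : AntisymmForm A Λ}

lemma heisPsi_injective : Function.Injective (heisPsi ω) := by
  refine (injective_iff_map_eq_one _).2 ?_
  rintro ⟨δm, S⟩ h
  have h' : ∀ a : Heis ω,
      heisAut ((Multiplicative.toAdd δm).comp ((S : AddAut Λ)).toAddMonoidHom) S a = a := by
    intro a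
    have h0 := congrArg Subtype.val h
    exact DFunLike.congr_fun h0 a
  have hS : ∀ x : Λ, (S : AddAut Λ) x = x := by
    intro x
    have := congrArg Heis.x (h' ⟨0, x⟩)
    simpa using this
  have hSone : S = 1 := by
    refine Subtype.ext (AddEquiv.ext fun x => ?_)
    simpa using hS x
  have hδ : Multiplicative.toAdd δm = 0 := by
    ext x
    have := congrArg Heis.k (h' ⟨0, x⟩)
    simpa [hS x] using this
  refine SemidirectProduct.ext ?_ hSone
  exact Multiplicative.toAdd.injective hδ

lemma heisPsi_surjective (h2 : ∀ a b : A, a + a = b + b → a = b) :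
    Function.Surjective (heisPsi ω) := by
  rintro ⟨τ, hτ⟩
  obtain ⟨τ', hτ'⟩ : τ⁻¹ ∈ AutPlus ω ∧ True := ⟨(AutPlus ω).inv_mem hτ, trivial⟩
  clear hτ'
  set f : Λ → A := fun x => (τ ⟨0, x⟩).k with hf
  set g : Λ → Λ := fun x => (τ ⟨0, x⟩).x with hg
  set f' : Λ → A := fun x => (τ⁻¹ ⟨0, x⟩).k with hf'
  set g' : Λ → Λ := fun x => (τ⁻¹ ⟨0, x⟩).x with hg'
  have key : ∀ (k : A) (x : Λ), τ ⟨k, x⟩ = ⟨k + f x, g x⟩ := by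
    intro k x
    have e : (⟨k, 0⟩ : Heis ω) * ⟨0, x⟩ = ⟨k, x⟩ := by
      refine Heis.ext ?_ ?_ <;> simp [ω.zero_left, ω.zero_right]
    rw [← e, map_mul, hτ k]
    refine Heis.ext ?_ ?_ <;> simp [ω.zero_left, hf, hg]
  have key' : ∀ (k : A) (x : Λ), τ⁻¹ ⟨k, x⟩ = ⟨k + f' x, g' x⟩ := by
    intro k x
    have e : (⟨k, 0⟩ : Heis ω) * ⟨0, x⟩ = ⟨k, x⟩ := by
      refine Heis.ext ?_ ?_ <;> simp [ω.zero_left, ω.zero_right]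
    rw [← e, map_mul, τ' k]
    refine Heis.ext ?_ ?_ <;> simp [ω.zero_left, hf', hg']
  have hmul : ∀ x y : Λ, g (x + y) = g x + g y ∧
      ω.B x y + f (x + y) = f x + f y + ω.B (g x) (g y) := by
    intro x y
    have h := map_mul τ (⟨0, x⟩ : Heis ω) ⟨0, y⟩
    have hL : (⟨0, x⟩ : Heis ω) * ⟨0, y⟩ = ⟨ω.B x y, x + y⟩ := by
      refine Heis.ext ?_ ?_ <;> simp
    rw [hL, key 0 x, key 0 y, key (ω.B x y) (x + y)] at h
    have hR : (⟨0 + f x, g x⟩ : Heis ω) * ⟨0 + f y, g y⟩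
        = ⟨f x + f y + ω.B (g x) (g y), g x + g y⟩ := by
      refine Heis.ext ?_ ?_ <;> simp
    rw [hR] at h
    exact ⟨congrArg Heis.x h, congrArg Heis.k h⟩
  have hform : ∀ x y : Λ, ω.B (g x) (g y) = ω.B x y := by
    intro x y
    have e1 := (hmul x y).2
    have e2 := (hmul y x).2
    rw [add_comm y x, ω.antisymm y x, ω.antisymm (g y) (g x)] at e2
    refine h2 _ _ ?_
    calc ω.B (g x) (g y) + ω.B (g x) (g y)
        = (f x + f y + ω.B (g x) (g y)) - (f y + f x + -ω.B (g x) (g y)) := by abel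
      _ = (ω.B x y + f (x + y)) - (-ω.B x y + f (x + y)) := by rw [e1, e2]
      _ = ω.B x y + ω.B x y := by abel
  have hgadd : ∀ x y : Λ, g (x + y) = g x + g y := fun x y => (hmul x y).1
  have hfadd : ∀ x y : Λ, f (x + y) = f x + f y := by
    intro x y
    have e1 := (hmul x y).2
    rw [hform x y] at e1
    have : ω.B x y + f (x + y) = ω.B x y + (f x + f y) := by rw [e1]; abel
    exact add_left_cancel this
  have hg'g : ∀ x : Λ, g' (g x) = x := by
    intro x
    have h := τ.symm_apply_apply ⟨0, x⟩
    rw [show τ.symm = (τ⁻¹ : MulAut (Heis ω)) from rfl] at h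
    rw [show τ (⟨0, x⟩ : Heis ω) = ⟨0 + f x, g x⟩ from key 0 x, key' _ _] at h
    exact congrArg Heis.x h
  have hgg' : ∀ x : Λ, g (g' x) = x := by
    intro x
    have h := τ.apply_symm_apply ⟨0, x⟩
    rw [show τ.symm = (τ⁻¹ : MulAut (Heis ω)) from rfl] at h
    rw [show τ⁻¹ (⟨0, x⟩ : Heis ω) = ⟨0 + f' x, g' x⟩ from key' 0 x, key _ _] at h
    exact congrArg Heis.x h
  have hg'add : ∀ x y : Λ, g' (x + y) = g' x + g' y := by
    intro x y
    have : g (g' x + g' y) = x + y := by rw [hgadd, hgg', hgg']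
    rw [← this, hg'g]
  set S : AddAut Λ := AddEquiv.mk' (Equiv.mk g g' hg'g hgg') hgadd with hSdef
  have hSmem : S ∈ Sp ω := fun x y => hform x y
  set δ : Λ →+ A := AddMonoidHom.mk' (fun x => f (g' x))
    (fun x y => by show f (g' (x + y)) = f (g' x) + f (g' y); rw [hg'add, hfadd]) with hδdef
  refine ⟨⟨Multiplicative.ofAdd δ, ⟨S, hSmem⟩⟩, ?_⟩
  refine Subtype.ext (MulEquiv.ext fun a => ?_)
  show heisAut (δ.comp S.toAddMonoidHom) ⟨S, hSmem⟩ a = τ a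
  rw [key a.k a.x]
  refine Heis.ext ?_ ?_
  · show a.k + δ (S a.x) = a.k + f a.x
    have : δ (S a.x) = f (g' (g a.x)) := rfl
    rw [this, hg'g]
  · rfl

end Bij

/-- `Aut⁺(H) ≅ Sp(Λ) ⋉ Hom(Λ, ℤν)`, where `Sp(Λ)` acts on `Hom(Λ, ℤν)` by
precomposition with the inverse. -/

theorem heisenberg_autplus_semidirect (ν : ℚ) (hν : 0 < ν)
    {Λ : Type*} [AddCommGroup Λ] [Module.Free ℤ Λ] [Module.Finite ℤ Λ]
    (ω : AntisymmForm (AddSubgroup.zmultiples ν) Λ)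
    (hnd : ∀ x : Λ, x ≠ 0 → ∃ y : Λ, ω.B x y ≠ 0) :
    ∃ φ : Sp ω →* MulAut (Multiplicative (Λ →+ AddSubgroup.zmultiples ν)),
      (∀ (S : Sp ω) (δ : Λ →+ AddSubgroup.zmultiples ν) (x : Λ),
        Multiplicative.toAdd (φ S (Multiplicative.ofAdd δ)) x
          = δ (((S⁻¹ : Sp ω) : AddAut Λ) x)) ∧
      Nonempty ((AutPlus ω) ≃*
        SemidirectProduct (Multiplicative (Λ →+ AddSubgroup.zmultiples ν)) (Sp ω) φ) := by
  refine ⟨spPhi ω, fun S δ x => rfl, ⟨?_⟩⟩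
  have h2 : ∀ a b : AddSubgroup.zmultiples ν, a + a = b + b → a = b := by
    intro a b h
    have h' : (a : ℚ) + a = (b : ℚ) + b := by exact_mod_cast congrArg Subtype.val h
    exact Subtype.ext (by linarith)
  exact (MulEquiv.ofBijective (heisPsi ω) ⟨heisPsi_injective, heisPsi_surjective h2⟩).symm
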